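/- For every even integer k ≥ 6 and every choice of a (k−4)-regular graph H1 of order 2k−3 and a (k−6)-regular graph H2 of order 2k−5, the graphs Γ and Γ' defined below both have vertex-connectivity exactly 3. -/

import Mathlib

open scoped Classical

/-- Two finite graphs are cospectral (w.r.t. the adjacency matrix) if their adjacency
matrices have the same characteristic polynomial. -/
noncomputable def Cospectral {V W : Type*} [Fintype V] [DecidableEq V] [Fintype W]
    [DecidableEq W] (G : SimpleGraph V) (H : SimpleGraph W) : Prop :=
  (G.adjMatrix ℤ).charpoly = (H.adjMatrix ℤ).charpoly

/-- A graph is `d`-regular if every vertex has exactly `d` neighbors. -/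
def IsRegularGraph {V : Type*} (G : SimpleGraph V) (d : ℕ) : Prop :=
  ∀ v : V, (G.neighborSet v).ncard = d

/-- `G` has vertex-connectivity exactly `n`: some set of `n` vertices disconnects `G`
(the graph induced on its complement is not connected), and no smaller set does. -/
def HasVertexConnectivity {V : Type*} (G : SimpleGraph V) (n : ℕ) : Prop :=
  (∃ S : Set V, S.ncard = n ∧ ¬(G.induce Sᶜ).Connected) ∧
    ∀ S : Set V, S.ncard < n → (G.induce Sᶜ).Connected

/-- `G` has edge-connectivity exactly `n`: some set of `n` edges of `G` disconnects `G`,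
and no smaller set of edges does. -/
def HasEdgeConnectivity {V : Type*} (G : SimpleGraph V) (n : ℕ) : Prop :=
  (∃ F : Set (Sym2 V), F ⊆ G.edgeSet ∧ F.ncard = n ∧ ¬(G.deleteEdges F).Connected) ∧
    ∀ F : Set (Sym2 V), F ⊆ G.edgeSet → F.ncard < n → (G.deleteEdges F).Connected

/-- Adjacency rule of the cycle of length `k+1` on `{0, …, k}` (entries of `C`). -/
def cycRel (k : ℕ) (a b : ℕ) : Prop :=
  (a + 1) % (k + 1) = b ∨ (b + 1) % (k + 1) = a

/-- Entries of the `2k × 2k` matrix `L = [[J_{k-1}, O], [O, J_{k+1} - C]]`. -/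
def LRel (k : ℕ) (x x' : Fin (2 * k)) : Prop :=
  (x.val < k - 1 ∧ x'.val < k - 1) ∨
    (k - 1 ≤ x.val ∧ k - 1 ≤ x'.val ∧ ¬cycRel k (x.val - (k - 1)) (x'.val - (k - 1)))

/-- The class `Y`, ordered as: the `2k-3` vertices of `H1`, the `2k-5` vertices of `H2`,
then `k-1` vertices, then `k+1` vertices (order `6k-8`). -/
abbrev YT (k : ℕ) := Fin (2 * k - 3) ⊕ (Fin (2 * k - 5) ⊕ (Fin (k - 1) ⊕ Fin (k + 1)))

/-- The vertex set of `Γ` and `Γ'`: `X1` (size `2k`), `X2` (size `2k`), `Y`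
(size `6k-8`); total order `10k-8`. -/
abbrev VE (k : ℕ) := Fin (2 * k) ⊕ (Fin (2 * k) ⊕ YT k)

/-- The column block (`1, 2, 3, 4`, or `0` for the zero block) of a column of the
`4k × (6k-8)` matrix `[M1; M2]`: the five column blocks have widths
`k-2, k-2, k-2, k-2, 2k`. -/
def colBlk (k : ℕ) : YT k → ℕ
  | Sum.inl c => if c.val < k - 2 then 1 else if c.val < 2 * k - 4 then 2 else 3
  | Sum.inr (Sum.inl c) => if c.val < k - 3 then 3 else 4
  | _ => 0

/-- Entries of the matrix `B`, the adjacency matrix of the graph `H` induced on `Y`: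
`[[B1, O, J, O], [O, B2, O, J], [J, O, J-I, O], [O, J, O, J-I]]`
(the diagonal is removed by `SimpleGraph.fromRel`). -/
def yRel (k : ℕ) (H1 : SimpleGraph (Fin (2 * k - 3))) (H2 : SimpleGraph (Fin (2 * k - 5))) :
    YT k → YT k → Prop
  | Sum.inl a, Sum.inl b => H1.Adj a b
  | Sum.inl _, Sum.inr (Sum.inr (Sum.inl _)) => True
  | Sum.inr (Sum.inl a), Sum.inr (Sum.inl b) => H2.Adj a b
  | Sum.inr (Sum.inl _), Sum.inr (Sum.inr (Sum.inr _)) => True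
  | Sum.inr (Sum.inr (Sum.inl _)), Sum.inr (Sum.inr (Sum.inl _)) => True
  | Sum.inr (Sum.inr (Sum.inr _)), Sum.inr (Sum.inr (Sum.inr _)) => True
  | _, _ => False

/-- The relation defining the graph with adjacency matrix
`[[A1, L, M1], [Lᵀ, A2, M2], [M1ᵀ, M2ᵀ, B]]` where `A1 = A2 = L - I` and where the
matrix `[M1; M2]` has the all-ones block `J_{k,k-2}` exactly in row block `mrow b` of
column block `b` (rows are grouped into four blocks of height `k`). -/
def edgeRel (k : ℕ) (H1 : SimpleGraph (Fin (2 * k - 3))) (H2 : SimpleGraph (Fin (2 * k - 5)))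
    (mrow : ℕ → ℕ) : VE k → VE k → Prop
  | Sum.inl x, Sum.inl x' => LRel k x x'
  | Sum.inl x, Sum.inr (Sum.inl x') => LRel k x x'
  | Sum.inl x, Sum.inr (Sum.inr c) =>
      colBlk k c ≠ 0 ∧ mrow (colBlk k c) = (if x.val < k then 1 else 2)
  | Sum.inr (Sum.inl x), Sum.inr (Sum.inl x') => LRel k x x'
  | Sum.inr (Sum.inl x), Sum.inr (Sum.inr c) =>
      colBlk k c ≠ 0 ∧ mrow (colBlk k c) = (if x.val < k then 3 else 4)
  | Sum.inr (Sum.inr c), Sum.inr (Sum.inr c') => yRel k H1 H2 c c'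
  | _, _ => False

/-- Row-block placement for `[M1; M2] = [[O,J,O,O,O],[O,O,J,O,O],[J,O,O,O,O],[O,O,O,J,O]]`. -/
def mrowGamma : ℕ → ℕ := fun b =>
  if b = 1 then 3 else if b = 2 then 1 else if b = 3 then 2 else if b = 4 then 4 else 0

/-- Row-block placement for `[M1'; M2'] = [[O,O,J,O,O],[O,J,O,O,O],[O,O,O,J,O],[J,O,O,O,O]]`. -/
def mrowGamma' : ℕ → ℕ := fun b =>
  if b = 1 then 4 else if b = 2 then 2 else if b = 3 then 1 else if b = 4 then 3 else 0

/-- The graph `Γ`. -/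
def GammaE (k : ℕ) (H1 : SimpleGraph (Fin (2 * k - 3))) (H2 : SimpleGraph (Fin (2 * k - 5))) :
    SimpleGraph (VE k) := SimpleGraph.fromRel (edgeRel k H1 H2 mrowGamma)

/-- The graph `Γ'`, obtained from `Γ` by Godsil–McKay switching. -/
def GammaE' (k : ℕ) (H1 : SimpleGraph (Fin (2 * k - 3))) (H2 : SimpleGraph (Fin (2 * k - 5))) :
    SimpleGraph (VE k) := SimpleGraph.fromRel (edgeRel k H1 H2 mrowGamma')

/-!
Split `X1` and `X2` into low halves (first `k` vertices) and high halves, and `Y` into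
`Y₁ = a ∪ c` (the vertices of `H1` and the `(k - 1)`-clique) and `Y₂ = b ∪ d` (those of `H2` and
the `(k + 1)`-clique). The matrix `L` joins low to high vertices only through the vertex
`k - 1` of `X1` and of `X2`, and `[M1; M2]` joins the low halves to one of `Y₁`, `Y₂` and the high
halves to the other, except at the last vertex of `a`, which sits in a column block of `Y₂`.
Deleting these three vertices leaves no edge between the two sides.

Conversely, after deleting at most two vertices, the cliques `c` and `d` keep a vertex each, to
which all of `Y₁`, resp. `Y₂`, is joined; every column block has three vertices in `Y₁` or in
`Y₂`, so every vertex of `X1 ∪ X2` keeps a neighbour there; and one of the three cut vertices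
survives and joins `Y₁` to `Y₂`.
-/

open Function

namespace SimpleGraph

variable {V : Type*} {G : SimpleGraph V}

theorem Reachable.apply_eq_of_adj {α : Type*} {f : V → α} (hf : ∀ u v, G.Adj u v → f u = f v)
    {u v : V} (h : G.Reachable u v) : f u = f v := by
  simpa [Relation.reflTransGen_eq_self] using
    ((G.reachable_iff_reflTransGen u v).1 h).lift f hf

variable (G) (S : Set V)

def ReachableOff (u v : V) : Prop :=
  ∃ (hu : u ∉ S) (hv : v ∉ S), (G.induce Sᶜ).Reachable ⟨u, hu⟩ ⟨v, hv⟩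

variable {G S} {u v w : V}

theorem ReachableOff.notMem_left (h : G.ReachableOff S u v) : u ∉ S := h.1

theorem ReachableOff.symm (h : G.ReachableOff S u v) : G.ReachableOff S v u :=
  let ⟨hu, hv, h⟩ := h; ⟨hv, hu, h.symm⟩

theorem ReachableOff.trans (h : G.ReachableOff S u v) (h' : G.ReachableOff S v w) :
    G.ReachableOff S u w :=
  let ⟨hu, _, h⟩ := h; let ⟨_, hw, h'⟩ := h'; ⟨hu, hw, h.trans h'⟩

theorem reachableOff_refl (hu : u ∉ S) : G.ReachableOff S u u := ⟨hu, hu, .rfl⟩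

theorem Adj.reachableOff (h : G.Adj u v) (hu : u ∉ S) (hv : v ∉ S) : G.ReachableOff S u v :=
  ⟨hu, hv, Adj.reachable (induce_adj.2 h)⟩

theorem connected_induce_compl_of_reachableOff (hv : v ∉ S)
    (h : ∀ u ∉ S, G.ReachableOff S u v) : (G.induce Sᶜ).Connected :=
  (connected_iff_exists_forall_reachable _).2
    ⟨⟨v, hv⟩, fun u => let ⟨_, _, h⟩ := h u.1 u.2; h.symm⟩

theorem not_connected_induce_compl {α : Type*} (f : V → α)
    (hf : ∀ u v, u ∉ S → v ∉ S → G.Adj u v → f u = f v) (hu : u ∉ S) (hv : v ∉ S)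
    (huv : f u ≠ f v) : ¬(G.induce Sᶜ).Connected := fun h =>
  huv <| (h.preconnected ⟨u, hu⟩ ⟨v, hv⟩).apply_eq_of_adj (f := fun x : ↥Sᶜ => f x)
    fun x y hxy => hf x y x.2 y.2 (induce_adj.1 hxy)

end SimpleGraph

theorem Set.exists_mem_Ico_apply_notMem {V : Type*} [Finite V] {n m : ℕ} {e : Fin n → V}
    (he : Injective e) {S : Set V} (hS : S.ncard < m) {lo : ℕ} (hlo : lo + m ≤ n) :
    ∃ i : Fin n, lo ≤ i.val ∧ i.val < lo + m ∧ e i ∉ S := by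
  let f : Fin m → Fin n := fun j => ⟨lo + j, by omega⟩
  have hf : Injective f := fun j j' h => by
    simp only [f, Fin.mk.injEq, Nat.add_left_cancel_iff] at h; exact Fin.ext h
  obtain ⟨_, ⟨j, rfl⟩, hj⟩ := Set.exists_mem_notMem_of_ncard_lt_ncard (s := S)
    (t := Set.range (e ∘ f)) (by rwa [Set.ncard_range_of_injective (he.comp hf), Nat.card_fin])
  exact ⟨f j, by simp [f], by simp [f], hj⟩

namespace GammaConstruction

open SimpleGraph Finset

variable {k : ℕ}

abbrev x1 (i : Fin (2 * k)) : VE k := .inl i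
abbrev x2 (i : Fin (2 * k)) : VE k := .inr (.inl i)
abbrev ofY (c : YT k) : VE k := .inr (.inr c)
abbrev yA (i : Fin (2 * k - 3)) : YT k := .inl i
abbrev yB (i : Fin (2 * k - 5)) : YT k := .inr (.inl i)
abbrev yC (i : Fin (k - 1)) : YT k := .inr (.inr (.inl i))
abbrev yD (i : Fin (k + 1)) : YT k := .inr (.inr (.inr i))

abbrev blockGraph (k : ℕ) (H1 : SimpleGraph (Fin (2 * k - 3)))
    (H2 : SimpleGraph (Fin (2 * k - 5))) (mrow : ℕ → ℕ) : SimpleGraph (VE k) :=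
  SimpleGraph.fromRel (edgeRel k H1 H2 mrow)

def rowBlk (k : ℕ) : VE k → ℕ
  | .inl x => if x.val < k then 1 else 2
  | .inr (.inl x) => if x.val < k then 3 else 4
  | _ => 0

def blockSide (t : Bool) (β : ℕ) : Bool := if β ≤ 2 then t else !t

/-- `t` is the side of `Y₁ = a ∪ c`, which holds column blocks `1, 2`; blocks `3, 4` lie (up to
one vertex) in `Y₂ = b ∪ d`. The low row blocks `1, 3` are to be joined to the side `true`. -/
def SidedPlacement (mrow : ℕ → ℕ) (t : Bool) : Prop :=
  ∀ β ∈ Icc 1 4, decide (mrow β = 1 ∨ mrow β = 3) = blockSide t β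

def hub (c0 : Fin (k - 1)) (d0 : Fin (k + 1)) (β : ℕ) : VE k :=
  if β ≤ 2 then ofY (yC c0) else ofY (yD d0)

theorem rowBlk_mem_Icc {w : VE k} (h : rowBlk k w ≠ 0) : rowBlk k w ∈ Icc 1 4 := by
  rw [mem_Icc]; unfold rowBlk at h ⊢; grind

theorem colBlk_mem_Icc {c : YT k} (h : colBlk k c ≠ 0) : colBlk k c ∈ Icc 1 4 := by
  rw [mem_Icc]; unfold colBlk at h ⊢; grind

theorem blockSide_ne_iff {t : Bool} {β β' : ℕ} :
    blockSide t β ≠ blockSide t β' ↔ (β ≤ 2 ↔ ¬β' ≤ 2) := by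
  unfold blockSide; cases t <;> split_ifs <;> simp_all

theorem LRel.lt_iff_lt {x x' : Fin (2 * k)} (hx : x.val ≠ k - 1) (hx' : x'.val ≠ k - 1)
    (h : LRel k x x') : x.val < k ↔ x'.val < k := by
  unfold LRel at h; omega

theorem lRel_of_mem_Icc (hk : 5 ≤ k) {x x' : Fin (2 * k)} (hx : x.val = k - 1)
    (hx' : x'.val ∈ Set.Icc (k + 1) (k + 3)) : LRel k x x' := by
  rw [Set.mem_Icc] at hx'
  refine .inr ⟨by omega, by omega, ?_⟩
  simp only [cycRel, hx, Nat.sub_self, zero_add]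
  rw [Nat.mod_eq_of_lt (by omega), Nat.mod_eq_of_lt (by omega)]
  omega

section Adjacency

variable (H1 : SimpleGraph (Fin (2 * k - 3))) (H2 : SimpleGraph (Fin (2 * k - 5)))
  (mrow : ℕ → ℕ)

theorem adj_ofY {w : VE k} {c : YT k} (hw : rowBlk k w ≠ 0) (hc : colBlk k c ≠ 0)
    (h : mrow (colBlk k c) = rowBlk k w) : (blockGraph k H1 H2 mrow).Adj w (ofY c) := by
  rcases w with x | x | y
  · exact ⟨by simp, .inl ⟨hc, h⟩⟩
  · exact ⟨by simp, .inl ⟨hc, h⟩⟩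
  · exact absurd rfl hw

theorem adj_yA_yC (i j) : (blockGraph k H1 H2 mrow).Adj (ofY (yA i)) (ofY (yC j)) :=
  ⟨by simp, .inl trivial⟩

theorem adj_yB_yD (i j) : (blockGraph k H1 H2 mrow).Adj (ofY (yB i)) (ofY (yD j)) :=
  ⟨by simp, .inl trivial⟩

theorem adj_yC_yC {i j} (h : i ≠ j) : (blockGraph k H1 H2 mrow).Adj (ofY (yC i)) (ofY (yC j)) :=
  ⟨by simpa using h, .inl trivial⟩

theorem adj_yD_yD {i j} (h : i ≠ j) : (blockGraph k H1 H2 mrow).Adj (ofY (yD i)) (ofY (yD j)) :=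
  ⟨by simpa using h, .inl trivial⟩

theorem adj_x1_x1 {i j} (h : i ≠ j) (hL : LRel k i j) :
    (blockGraph k H1 H2 mrow).Adj (x1 i) (x1 j) :=
  ⟨by simpa using h, .inl hL⟩

theorem adj_x2_x2 {i j} (h : i ≠ j) (hL : LRel k i j) :
    (blockGraph k H1 H2 mrow).Adj (x2 i) (x2 j) :=
  ⟨by simpa using h, .inl hL⟩

end Adjacency

section Cut

variable {H1 : SimpleGraph (Fin (2 * k - 3))} {H2 : SimpleGraph (Fin (2 * k - 5))}
  {mrow : ℕ → ℕ} {t : Bool}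

def ySide (t : Bool) : YT k → Bool
  | .inl _ | .inr (.inr (.inl _)) => t
  | _ => !t

def side (t : Bool) : VE k → Bool
  | .inl x | .inr (.inl x) => decide (x.val < k)
  | .inr (.inr c) => ySide t c

def OnCut (k : ℕ) : VE k → Prop
  | .inl x | .inr (.inl x) => x.val = k - 1
  | .inr (.inr (.inl a)) => a.val = 2 * k - 4
  | _ => False

theorem ySide_eq_blockSide {c : YT k} (hc : ¬OnCut k (ofY c)) (h : colBlk k c ≠ 0) :
    ySide t c = blockSide t (colBlk k c) := by
  unfold OnCut colBlk ySide blockSide at *; grind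

theorem ySide_eq_of_yRel {c c' : YT k} (h : yRel k H1 H2 c c') :
    ySide t c = ySide t c' := by
  rcases c with _ | _ | _ | _ <;> rcases c' with _ | _ | _ | _ <;> first | rfl | exact h.elim

theorem side_eq_of_edgeRel (hside : SidedPlacement mrow t) {u v : VE k} (hu : ¬OnCut k u)
    (hv : ¬OnCut k v) (h : edgeRel k H1 H2 mrow u v) : side t u = side t v := by
  have hXY : ∀ (x : Fin (2 * k)) (c : YT k) (r : ℕ), r = 1 ∨ r = 3 → ¬OnCut k (ofY c) →
      colBlk k c ≠ 0 ∧ mrow (colBlk k c) = (if x.val < k then r else r + 1) →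
      decide (x.val < k) = ySide t c := by
    rintro x c r hr hc ⟨h0, hrow⟩
    rw [ySide_eq_blockSide hc h0, ← hside _ (colBlk_mem_Icc h0), hrow]
    by_cases hx : x.val < k <;> simp [hx] <;> omega
  rcases u with x | x | c <;> rcases v with x' | x' | c'
  · exact decide_eq_decide.2 (LRel.lt_iff_lt hu hv h)
  · exact decide_eq_decide.2 (LRel.lt_iff_lt hu hv h)
  · exact hXY x c' 1 (.inl rfl) hv h
  · exact h.elim
  · exact decide_eq_decide.2 (LRel.lt_iff_lt hu hv h)
  · exact hXY x c' 3 (.inr rfl) hv h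
  · exact h.elim
  · exact h.elim
  · exact ySide_eq_of_yRel h

theorem ncard_onCut (hk : 2 ≤ k) : {v | OnCut k v}.ncard = 3 := by
  refine Set.ncard_eq_three.2 ⟨x1 ⟨k - 1, by omega⟩, x2 ⟨k - 1, by omega⟩,
    ofY (yA ⟨2 * k - 4, by omega⟩), by simp, by simp, by simp, Set.ext fun v => ?_⟩
  rcases v with x | x | _ | _ <;> simp [OnCut, Fin.ext_iff]

theorem not_connected_induce_onCut (hk : 2 ≤ k) (hside : SidedPlacement mrow t) :
    ¬((blockGraph k H1 H2 mrow).induce {v | OnCut k v}ᶜ).Connected := by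
  refine not_connected_induce_compl (side t) (fun u v hu hv huv => ?_)
    (u := x1 ⟨0, by omega⟩) (v := x1 ⟨k, by omega⟩) (by simp [OnCut]; omega)
    (by simp [OnCut]; omega) (by simp [side]; omega)
  rcases huv.2 with h | h
  · exact side_eq_of_edgeRel hside hu hv h
  · exact (side_eq_of_edgeRel hside hv hu h).symm

end Cut

section Connectivity

variable {H1 : SimpleGraph (Fin (2 * k - 3))} {H2 : SimpleGraph (Fin (2 * k - 5))}
  {mrow : ℕ → ℕ} {t : Bool} {S : Set (VE k)}

theorem exists_rowBlk_eq (hk : 6 ≤ k) (hS : S.ncard < 3) {r : ℕ} (hr : r ∈ Icc 1 4) :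
    ∃ w ∉ S, rowBlk k w = r := by
  obtain ⟨hr1, hr4⟩ := mem_Icc.1 hr
  have hx1 := fun lo => Set.exists_mem_Ico_apply_notMem (e := fun i => x1 i)
    (fun _ _ h => by simpa using h) hS (lo := lo)
  have hx2 := fun lo => Set.exists_mem_Ico_apply_notMem (e := fun i => x2 i)
    (fun _ _ h => by simpa using h) hS (lo := lo)
  interval_cases r
  · obtain ⟨i, -, hi, hiS⟩ := hx1 0 (by omega)
    exact ⟨_, hiS, by simp [rowBlk]; omega⟩
  · obtain ⟨i, hi, -, hiS⟩ := hx1 k (by omega)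
    exact ⟨_, hiS, by simp [rowBlk]; omega⟩
  · obtain ⟨i, -, hi, hiS⟩ := hx2 0 (by omega)
    exact ⟨_, hiS, by simp [rowBlk]; omega⟩
  · obtain ⟨i, hi, -, hiS⟩ := hx2 k (by omega)
    exact ⟨_, hiS, by simp [rowBlk]; omega⟩

variable (H1 H2 mrow)

theorem exists_colBlk_reachableOff_hub (hk : 6 ≤ k) (hS : S.ncard < 3) {c0 : Fin (k - 1)}
    {d0 : Fin (k + 1)} (hc0 : ofY (yC c0) ∉ S) (hd0 : ofY (yD d0) ∉ S) {β : ℕ}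
    (hβ : β ∈ Icc 1 4) :
    ∃ c : YT k, colBlk k c = β ∧
      (blockGraph k H1 H2 mrow).ReachableOff S (ofY c) (hub c0 d0 β) := by
  obtain ⟨hβ1, hβ4⟩ := mem_Icc.1 hβ
  have ha := fun lo => Set.exists_mem_Ico_apply_notMem (e := fun i => ofY (yA i))
    (fun _ _ h => by simpa using h) hS (lo := lo)
  have hb := fun lo => Set.exists_mem_Ico_apply_notMem (e := fun i => ofY (yB i))
    (fun _ _ h => by simpa using h) hS (lo := lo)
  interval_cases β
  · obtain ⟨i, -, hi, hiS⟩ := ha 0 (by omega)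
    exact ⟨yA i, by simp only [colBlk]; split_ifs <;> omega,
      (adj_yA_yC H1 H2 mrow i c0).reachableOff hiS hc0⟩
  · obtain ⟨i, hi, hi', hiS⟩ := ha (k - 2) (by omega)
    exact ⟨yA i, by simp only [colBlk]; split_ifs <;> omega,
      (adj_yA_yC H1 H2 mrow i c0).reachableOff hiS hc0⟩
  · obtain ⟨i, -, hi, hiS⟩ := hb 0 (by omega)
    exact ⟨yB i, by simp only [colBlk]; split_ifs <;> omega,
      (adj_yB_yD H1 H2 mrow i d0).reachableOff hiS hd0⟩
  · obtain ⟨i, hi, -, hiS⟩ := hb (k - 3) (by omega)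
    exact ⟨yB i, by simp only [colBlk]; split_ifs <;> omega,
      (adj_yB_yD H1 H2 mrow i d0).reachableOff hiS hd0⟩

theorem reachableOff_hub_of_rowBlk (hk : 6 ≤ k) (hS : S.ncard < 3) {c0 : Fin (k - 1)}
    {d0 : Fin (k + 1)} (hc0 : ofY (yC c0) ∉ S) (hd0 : ofY (yD d0) ∉ S) {w : VE k} (hw : w ∉ S)
    (hrow : rowBlk k w ≠ 0) {β : ℕ} (hβ : β ∈ Icc 1 4) (h : mrow β = rowBlk k w) :
    (blockGraph k H1 H2 mrow).ReachableOff S w (hub c0 d0 β) := by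
  obtain ⟨c, rfl, hc⟩ := exists_colBlk_reachableOff_hub H1 H2 mrow hk hS hc0 hd0 hβ
  have hc0 : colBlk k c ≠ 0 := by rw [mem_Icc] at hβ; omega
  exact ((adj_ofY H1 H2 mrow hrow hc0 h).reachableOff hw (ReachableOff.notMem_left hc)).trans hc

theorem reachableOff_hubs_of_adj (hk : 6 ≤ k) (hside : SidedPlacement mrow t)
    (hsurj : ∀ r ∈ Icc 1 4, ∃ β ∈ Icc 1 4, mrow β = r) (hS : S.ncard < 3) {c0 : Fin (k - 1)}
    {d0 : Fin (k + 1)} (hc0 : ofY (yC c0) ∉ S) (hd0 : ofY (yD d0) ∉ S) {u v : VE k}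
    (huv : (blockGraph k H1 H2 mrow).Adj u v) (hu : u ∉ S) (hv : v ∉ S) {r : ℕ}
    (hr : r = 1 ∨ r = 3) (hru : rowBlk k u = r) (hrv : rowBlk k v = r + 1) :
    (blockGraph k H1 H2 mrow).ReachableOff S (ofY (yC c0)) (ofY (yD d0)) := by
  obtain ⟨β, hβ, hβr⟩ := hsurj r (by simp; omega)
  obtain ⟨β', hβ', hβr'⟩ := hsurj (r + 1) (by simp; omega)
  have hu' := reachableOff_hub_of_rowBlk H1 H2 mrow hk hS hc0 hd0 hu (by omega) hβ
    (hβr.trans hru.symm)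
  have hv' := reachableOff_hub_of_rowBlk H1 H2 mrow hk hS hc0 hd0 hv (by omega) hβ'
    (hβr'.trans hrv.symm)
  have hsides : blockSide t β ≠ blockSide t β' := by
    rw [← hside β hβ, ← hside β' hβ', hβr, hβr']; rcases hr with rfl | rfl <;> decide
  by_cases hβ2 : β ≤ 2
  · have hβ'2 : ¬β' ≤ 2 := blockSide_ne_iff.1 hsides |>.1 hβ2
    simp only [hub, hβ2, hβ'2, if_true, if_false] at hu' hv'
    exact hu'.symm.trans ((huv.reachableOff hu hv).trans hv')
  · have hβ'2 : β' ≤ 2 := by by_contra h; exact hβ2 (blockSide_ne_iff.1 hsides |>.2 h)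
    simp only [hub, hβ2, hβ'2, if_true, if_false] at hu' hv'
    exact hv'.symm.trans ((huv.reachableOff hu hv).symm.trans hu')

theorem reachableOff_hubs (hk : 6 ≤ k) (hside : SidedPlacement mrow t)
    (hsurj : ∀ r ∈ Icc 1 4, ∃ β ∈ Icc 1 4, mrow β = r) (h3 : mrow 3 ∈ Icc 1 4)
    (hS : S.ncard < 3) {c0 : Fin (k - 1)} {d0 : Fin (k + 1)} (hc0 : ofY (yC c0) ∉ S)
    (hd0 : ofY (yD d0) ∉ S) :
    (blockGraph k H1 H2 mrow).ReachableOff S (ofY (yC c0)) (ofY (yD d0)) := by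
  obtain ⟨p, hp, hpS⟩ := Set.exists_mem_notMem_of_ncard_lt_ncard (s := S)
    (t := {v | OnCut k v}) (by rwa [ncard_onCut (by omega)])
  rcases p with x | x | a | _ | _ | _
  · have hx : x.val = k - 1 := hp
    obtain ⟨j, hj, hj', hjS⟩ := Set.exists_mem_Ico_apply_notMem (e := fun i => x1 i)
      (fun _ _ h => by simpa using h) hS (lo := k + 1) (by omega)
    refine reachableOff_hubs_of_adj H1 H2 mrow hk hside hsurj hS hc0 hd0
      (adj_x1_x1 H1 H2 mrow (Fin.ne_of_val_ne (by omega)) (lRel_of_mem_Icc (by omega) hx ⟨hj, by omega⟩))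
      hpS hjS (.inl rfl) ?_ ?_ <;> simp only [rowBlk] <;> split_ifs <;> omega
  · have hx : x.val = k - 1 := hp
    obtain ⟨j, hj, hj', hjS⟩ := Set.exists_mem_Ico_apply_notMem (e := fun i => x2 i)
      (fun _ _ h => by simpa using h) hS (lo := k + 1) (by omega)
    refine reachableOff_hubs_of_adj H1 H2 mrow hk hside hsurj hS hc0 hd0
      (adj_x2_x2 H1 H2 mrow (Fin.ne_of_val_ne (by omega)) (lRel_of_mem_Icc (by omega) hx ⟨hj, by omega⟩))
      hpS hjS (.inr rfl) ?_ ?_ <;> simp only [rowBlk] <;> split_ifs <;> omega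
  · have ha : a.val = 2 * k - 4 := hp
    obtain ⟨w, hwS, hw⟩ := exists_rowBlk_eq hk hS h3
    obtain ⟨c, hc3, hc⟩ := exists_colBlk_reachableOff_hub H1 H2 mrow hk hS hc0 hd0
      (β := 3) (by simp)
    have ha3 : colBlk k (yA a) = 3 := by simp only [colBlk]; split_ifs <;> omega
    have hw0 : rowBlk k w ≠ 0 := by rw [mem_Icc] at h3; omega
    have hwa := adj_ofY H1 H2 mrow hw0 (by omega) (by rw [ha3, hw] : mrow (colBlk k (yA a)) = _)
    have hwc := adj_ofY H1 H2 mrow hw0 (by omega) (by rw [hc3, hw] : mrow (colBlk k c) = _)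
    exact ((adj_yA_yC H1 H2 mrow a c0).symm.reachableOff hc0 hpS).trans
      ((hwa.symm.reachableOff hpS hwS).trans
        ((hwc.reachableOff hwS (ReachableOff.notMem_left hc)).trans hc))
  all_goals exact hp.elim

theorem connected_induce_compl (hk : 6 ≤ k) (hside : SidedPlacement mrow t)
    (hsurj : ∀ r ∈ Icc 1 4, ∃ β ∈ Icc 1 4, mrow β = r) (h3 : mrow 3 ∈ Icc 1 4)
    (hS : S.ncard < 3) : ((blockGraph k H1 H2 mrow).induce Sᶜ).Connected := by
  obtain ⟨c0, -, -, hc0⟩ := Set.exists_mem_Ico_apply_notMem (e := fun i => ofY (yC i))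
    (fun _ _ h => by simpa using h) hS (lo := 0) (by omega)
  obtain ⟨d0, -, -, hd0⟩ := Set.exists_mem_Ico_apply_notMem (e := fun i => ofY (yD i))
    (fun _ _ h => by simpa using h) hS (lo := 0) (by omega)
  have link := reachableOff_hubs H1 H2 mrow hk hside hsurj h3 hS hc0 hd0
  have hX : ∀ w ∉ S, rowBlk k w ≠ 0 →
      (blockGraph k H1 H2 mrow).ReachableOff S w (ofY (yC c0)) := by
    intro w hw hrow
    obtain ⟨β, hβ, hβr⟩ := hsurj _ (rowBlk_mem_Icc hrow)
    have h := reachableOff_hub_of_rowBlk H1 H2 mrow hk hS hc0 hd0 hw hrow hβ hβr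
    unfold hub at h
    split_ifs at h
    exacts [h, h.trans link.symm]
  refine connected_induce_compl_of_reachableOff hc0 fun v hv => ?_
  rcases v with x | x | a | b | c | d
  · exact hX _ hv (by simp only [rowBlk]; split_ifs <;> omega)
  · exact hX _ hv (by simp only [rowBlk]; split_ifs <;> omega)
  · exact (adj_yA_yC H1 H2 mrow a c0).reachableOff hv hc0
  · exact ((adj_yB_yD H1 H2 mrow b d0).reachableOff hv hd0).trans link.symm
  · obtain rfl | hc := eq_or_ne c c0
    · exact reachableOff_refl hv
    · exact (adj_yC_yC H1 H2 mrow hc).reachableOff hv hc0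
  · obtain rfl | hd := eq_or_ne d d0
    · exact link.symm
    · exact ((adj_yD_yD H1 H2 mrow hd).reachableOff hv hd0).trans link.symm

theorem hasVertexConnectivity_three (hk : 6 ≤ k) (hside : SidedPlacement mrow t)
    (hsurj : ∀ r ∈ Icc 1 4, ∃ β ∈ Icc 1 4, mrow β = r) (h3 : mrow 3 ∈ Icc 1 4) :
    HasVertexConnectivity (blockGraph k H1 H2 mrow) 3 :=
  ⟨⟨_, ncard_onCut (by omega), not_connected_induce_onCut (by omega) hside⟩,
    fun _ hS => connected_induce_compl H1 H2 mrow hk hside hsurj h3 hS⟩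

end Connectivity

theorem sidedPlacement_mrowGamma : SidedPlacement mrowGamma true := by
  unfold SidedPlacement; decide

theorem sidedPlacement_mrowGamma' : SidedPlacement mrowGamma' false := by
  unfold SidedPlacement; decide

end GammaConstruction

theorem stmt13_general (k : ℕ) (hk : 6 ≤ k)
    (H1 : SimpleGraph (Fin (2 * k - 3)))
    (H2 : SimpleGraph (Fin (2 * k - 5))) :
    HasVertexConnectivity (GammaE k H1 H2) 3 ∧
      HasVertexConnectivity (GammaE' k H1 H2) 3 :=
  ⟨GammaConstruction.hasVertexConnectivity_three H1 H2 _ hk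
      GammaConstruction.sidedPlacement_mrowGamma (by decide) (by decide),
    GammaConstruction.hasVertexConnectivity_three H1 H2 _ hk
      GammaConstruction.sidedPlacement_mrowGamma' (by decide) (by decide)⟩

/-- For every even `k ≥ 6` and every `(k-4)`-regular graph `H1` of order
`2k-3` and `(k-6)`-regular graph `H2` of order `2k-5`, the graphs `Γ` and `Γ'` both have
vertex-connectivity exactly `3`. -/
theorem stmt13 (k : ℕ) (hk : 6 ≤ k) (hke : Even k)
    (H1 : SimpleGraph (Fin (2 * k - 3))) (hH1 : IsRegularGraph H1 (k - 4))
    (H2 : SimpleGraph (Fin (2 * k - 5))) (hH2 : IsRegularGraph H2 (k - 6)) :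
    HasVertexConnectivity (GammaE k H1 H2) 3 ∧
      HasVertexConnectivity (GammaE' k H1 H2) 3 :=
  stmt13_general k hk H1 H2
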